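/- arXiv:1210.8402 — 2 statements merged into one kernel-verified Lean document; each statement's English description precedes it below -/
import Mathlib

section
/- Let K be a field of arbitrary characteristic and R = K[x_1,…,x_n]. Then every homogeneous polynomial f ∈ R of degree d satisfies the higher-order Euler formula E_r·f = binom(d,r)·f (where binom(d,r) is taken via its image in K) for every r ≥ 1. -/
/-- The divided-power partial derivative `∂_i^{[j]}` on `K[x_1,…,x_n]`, determined on
monomials by `∂_i^{[j]}(x^a) = binom(a_i, j) • x^{a - j·e_i}` (zero when `a_i < j`). -/
noncomputable def dpDeriv (K : Type*) [CommRing K] {n : ℕ} (i : Fin n) (j : ℕ) :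
    MvPolynomial (Fin n) K →ₗ[K] MvPolynomial (Fin n) K :=
  (Finsupp.lsum K fun a : Fin n →₀ ℕ =>
    (((a i).choose j : K)) •
      (MvPolynomial.monomial (a - Finsupp.single i j) : K →ₗ[K] MvPolynomial (Fin n) K))
    ∘ₗ (AddMonoidAlgebra.coeffLinearEquiv K).toLinearMap

/-- The `r`-th Euler operator `E_r = Σ_{i_1+⋯+i_n=r} x_1^{i_1}⋯x_n^{i_n} ∂_1^{[i_1]}⋯∂_n^{[i_n]}`
on `K[x_1,…,x_n]`. -/
noncomputable def eulerOp (K : Type*) [CommRing K] (n : ℕ) (r : ℕ) :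
    MvPolynomial (Fin n) K →ₗ[K] MvPolynomial (Fin n) K :=
  ∑ c ∈ Finset.Nat.antidiagonalTuple n r,
    LinearMap.mulLeft K (MvPolynomial.monomial (Finsupp.equivFunOnFinite.symm c) (1 : K)) ∘ₗ
      ((List.finRange n).map fun i => dpDeriv K i (c i)).prod

/-!
On a monomial `x^a`, the summand `x^c ∂^{[c]}` of `E_r` acts as multiplication by
`∏ i, binom(a_i, c_i)`: when this product is nonzero, `c ≤ a` and the factor `x^c` restores the
exponent. Summing over all `c` with `|c| = r` gives `binom(|a|, r)` by the multivariate
Vandermonde identity, and a homogeneous polynomial of degree `d` is a combination of monomials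
with `|a| = d`.
-/

open Finset MvPolynomial

theorem Finset.sum_piAntidiag_prod_choose {ι : Type*} [DecidableEq ι] (s : Finset ι)
    (a : ι → ℕ) (r : ℕ) :
    ∑ c ∈ s.piAntidiag r, ∏ i ∈ s, (a i).choose (c i) = (∑ i ∈ s, a i).choose r := by
  induction s using Finset.cons_induction generalizing r with
  | empty => rcases r with _ | r <;> simp
  | cons i s hi ih =>
    rw [piAntidiag_cons, sum_disjiUnion, sum_cons, Nat.add_choose_eq]
    refine sum_congr rfl fun p _ => ?_
    rw [sum_map, ← ih, mul_sum]
    refine sum_congr rfl fun g hg => ?_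
    have hgi : g i = 0 := by_contra fun h => hi ((mem_piAntidiag.mp hg).2 i h)
    have hs : ∀ j ∈ s, j ≠ i := fun j hj h => hi (h ▸ hj)
    rw [prod_cons]
    simp +contextual [hgi, hs]

theorem Finsupp.le_of_prod_choose_ne_zero {σ : Type*} [Fintype σ] {a c : σ →₀ ℕ}
    (h : ∏ i, (a i).choose (c i) ≠ 0) : c ≤ a := fun i =>
  Nat.le_of_not_lt fun hlt =>
    Finset.prod_ne_zero_iff.mp h i (mem_univ i) (Nat.choose_eq_zero_of_lt hlt)

section

variable {K : Type*} [CommRing K] {n : ℕ}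

theorem dpDeriv_monomial (i : Fin n) (j : ℕ) (a : Fin n →₀ ℕ) (k : K) :
    dpDeriv K i j (monomial a k) =
      ((a i).choose j : K) • monomial (a - Finsupp.single i j) k := by
  simp [dpDeriv, monomial]

theorem list_prod_dpDeriv_monomial (c : Fin n → ℕ) {l : List (Fin n)} (hl : l.Nodup)
    (a : Fin n →₀ ℕ) (k : K) :
    (l.map fun i => dpDeriv K i (c i)).prod (monomial a k) =
      (l.map fun i => ((a i).choose (c i) : K)).prod •
        monomial (a - (l.map fun i => Finsupp.single i (c i)).sum) k := by
  induction l with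
  | nil => simp
  | cons i t ih =>
    obtain ⟨hit, ht⟩ := List.nodup_cons.mp hl
    have hsum : (t.map fun j => Finsupp.single j (c j)).sum i = 0 := by
      rw [← Finsupp.applyAddHom_apply, map_list_sum, List.map_map]
      exact List.sum_eq_zero fun x hx => by
        obtain ⟨j, hj, rfl⟩ := List.mem_map.mp hx
        exact Finsupp.single_eq_of_ne (fun h => hit (h ▸ hj))
    simp only [List.map_cons, List.prod_cons, List.sum_cons, Module.End.mul_apply, ih ht,
      map_smul, dpDeriv_monomial, Finsupp.tsub_apply, hsum, tsub_zero, smul_smul, tsub_tsub]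
    rw [mul_comm, add_comm (Finsupp.single i (c i))]

theorem monomial_mul_prod_dpDeriv_monomial (c : Fin n → ℕ) (a : Fin n →₀ ℕ) (k : K) :
    monomial (Finsupp.equivFunOnFinite.symm c) 1 *
        ((List.finRange n).map fun i => dpDeriv K i (c i)).prod (monomial a k) =
      ((∏ i, (a i).choose (c i) : ℕ) : K) • monomial a k := by
  have hsum : ((List.finRange n).map fun i => Finsupp.single i (c i)).sum =
      Finsupp.equivFunOnFinite.symm c := by
    ext j
    simp [← Fin.sum_univ_def, Finsupp.finsetSum_apply, Finsupp.single_apply]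
  rw [list_prod_dpDeriv_monomial c (List.nodup_finRange n), hsum, ← Fin.prod_univ_def,
    ← Nat.cast_prod, mul_smul_comm, monomial_mul, one_mul]
  by_cases h : ∏ i, (a i).choose (c i) = 0
  · simp [h]
  · rw [add_tsub_cancel_of_le (Finsupp.le_of_prod_choose_ne_zero h)]

theorem eulerOp_monomial (r : ℕ) (a : Fin n →₀ ℕ) (k : K) :
    eulerOp K n r (monomial a k) = (a.degree.choose r : K) • monomial a k := by
  simp only [eulerOp, LinearMap.sum_apply, LinearMap.comp_apply, LinearMap.mulLeft_apply,
    monomial_mul_prod_dpDeriv_monomial]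
  rw [← sum_smul, ← Nat.cast_sum, ← piAntidiag_univ_fin_eq_antidiagonalTuple,
    sum_piAntidiag_prod_choose, Finsupp.degree_eq_sum]

theorem eulerOp_of_isHomogeneous {f : MvPolynomial (Fin n) K} {d : ℕ} (hf : f.IsHomogeneous d)
    (r : ℕ) : eulerOp K n r f = (d.choose r : K) • f := by
  conv_lhs => rw [f.as_sum]
  conv_rhs => rw [f.as_sum]
  rw [map_sum, smul_sum]
  refine sum_congr rfl fun a ha => ?_
  have hdeg : a.degree = d := by_contra fun h => mem_support_iff.mp ha (hf.coeff_eq_zero h)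
  rw [eulerOp_monomial, hdeg]

end

/-- Over a field `K` of arbitrary characteristic, every homogeneous
polynomial `f ∈ K[x_1,…,x_n]` of degree `d` satisfies the higher-order Euler formula
`E_r · f = binom(d, r) • f` (the binomial coefficient taken via its image in `K`)
for every `r ≥ 1`. -/
theorem euler_formula_homogeneous (K : Type*) [Field K] (n : ℕ)
    (f : MvPolynomial (Fin n) K) (d : ℕ) (hf : f.IsHomogeneous d) :
    ∀ r : ℕ, 1 ≤ r → eulerOp K n r f = (d.choose r : K) • f :=
  fun r _ => eulerOp_of_isHomogeneous hf r
end

section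
/- Let p be a prime and let a, b ∈ ℤ be integers. If binom(a,r) ≡ binom(b,r) (mod p) for every natural number r ≥ 1, then a = b. -/
/-!
Put `d = a - b`. Vandermonde's identity `binom(b + d, k) = ∑ᵢ binom(b, i) binom(d, k - i)`
shows, by strong induction on `k`, that `p ∣ binom(d, k)` for every `k ≥ 1`: all terms other
than `binom(b, k)` and `binom(d, k)` involve some `binom(d, j)` with `1 ≤ j < k`. If `d = n > 0`
this contradicts `binom(n, n) = 1`; by symmetry `a = b`.
-/

theorem Int.dvd_choose_sub_of_forall_choose_modEq {m a b : ℤ}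
    (h : ∀ r : ℕ, 1 ≤ r → Ring.choose a r ≡ Ring.choose b r [ZMOD m]) :
    ∀ k : ℕ, 1 ≤ k → m ∣ Ring.choose (a - b) k := by
  intro k
  induction k using Nat.strong_induction_on with
  | _ k ih =>
    intro hk
    obtain ⟨n, rfl⟩ : ∃ n, k = n + 1 := ⟨k - 1, by omega⟩
    have vandermonde : Ring.choose a (n + 1) =
        (∑ i ∈ Finset.range n, Ring.choose b (i + 1) * Ring.choose (a - b) (n - i)) +
          Ring.choose (a - b) (n + 1) + Ring.choose b (n + 1) := by
      have := Ring.add_choose_eq (r := b) (s := a - b) (n + 1) (Commute.all _ _)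
      rw [add_sub_cancel, Finset.Nat.sum_antidiagonal_eq_sum_range_succ
        (fun i j => Ring.choose b i * Ring.choose (a - b) j)] at this
      rw [this, Finset.sum_range_succ, Finset.sum_range_succ']
      simp
    have middle : m ∣ ∑ i ∈ Finset.range n, Ring.choose b (i + 1) * Ring.choose (a - b) (n - i) :=
      Finset.dvd_sum fun i hi =>
        (ih (n - i) (by omega) (by simp at hi; omega)).mul_left _
    have total : m ∣ Ring.choose a (n + 1) - Ring.choose b (n + 1) := (h (n + 1) hk).symm.dvd
    rw [vandermonde, add_sub_cancel_right] at total
    exact (dvd_add_right middle).mp total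

theorem Int.le_of_forall_choose_modEq {m a b : ℤ} (hm : ¬ m ∣ 1)
    (h : ∀ r : ℕ, 1 ≤ r → Ring.choose a r ≡ Ring.choose b r [ZMOD m]) : a ≤ b := by
  by_contra! hba
  obtain ⟨n, hn⟩ : ∃ n : ℕ, a - b = n := ⟨(a - b).toNat, by omega⟩
  have := Int.dvd_choose_sub_of_forall_choose_modEq h n (by omega)
  rw [hn, Ring.choose_natCast, Nat.choose_self, Nat.cast_one] at this
  exact hm this

/-- Let `p` be a prime and `a, b ∈ ℤ`. If the generalized binomial
coefficients satisfy `binom(a,r) ≡ binom(b,r) (mod p)` for every natural number `r ≥ 1`,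
then `a = b`.  Here `binom(a,b) = Ring.choose a b = a(a−1)⋯(a−b+1)/b! ∈ ℤ`. -/
theorem eq_of_choose_congr (p : ℕ) (hp : p.Prime) (a b : ℤ)
    (h : ∀ r : ℕ, 1 ≤ r → Ring.choose a r ≡ Ring.choose b r [ZMOD p]) : a = b := by
  have hp1 : ¬ (p : ℤ) ∣ 1 := by exact_mod_cast hp.not_dvd_one
  exact le_antisymm (Int.le_of_forall_choose_modEq hp1 h)
    (Int.le_of_forall_choose_modEq hp1 fun r hr => (h r hr).symm)
end
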